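/- For fixed Q ∈ ℕ, β > 0, t > 0, the Legendre transform π^*_{Q,λ}(t) = sup_{y<0}(t·y - π_{Q,λ}(y)) is a decreasing function of λ ≥ 0; indeed its derivative in λ equals -Σ_{q=1}^{Q} e^{β(y_{Q,λ}(t)+λ)q} < 0, where y_{Q,λ}(t) is the unique solution of t = π'_{Q,λ}(y). -/

import Mathlib

open Set
open scoped BigOperators

noncomputable def piQ (β lam : ℝ) (Q : ℕ) (y : ℝ) : ℝ :=
  (∑ q ∈ Finset.Icc 1 Q, Real.exp (β * (y + lam) * q) / (β * q)) +
  ∑' q : ℕ, Real.exp (β * y * ((q + Q + 1 : ℕ) : ℝ)) / (β * ((q + Q + 1 : ℕ) : ℝ))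

noncomputable def piQ' (β lam : ℝ) (Q : ℕ) (y : ℝ) : ℝ :=
  (∑ q ∈ Finset.Icc 1 Q, Real.exp (β * (y + lam) * q)) +
  ∑' q : ℕ, Real.exp (β * y * ((q + Q + 1 : ℕ) : ℝ))

/-! Since `π_λ` is a sum of convex exponentials with derivative `π'_λ`, its tangent line at the
root `y_λ` of `π'_λ = t` lies below it, so the supremum defining `π*_λ(t)` is attained at `y_λ`.
Only the finite sum depends on `λ`, and it increases strictly, which gives strict decrease.
For the derivative, evaluating the suprema at `λ` and `μ` at each other's maximisers squeezes the
difference quotient of `π*` between the `λ`-difference quotients of `π` at `y_λ` and at `y_μ`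
(the envelope theorem). Both converge to `Σ_{q ≤ Q} e^{β(y_λ+λ)q}` because `y_μ → y_λ`, which
follows from `π'_μ` being strictly increasing in `y` and continuous in `μ`. -/

open Real Filter Topology

theorem exp_div_tangent_le {β m : ℝ} (hβ : 0 < β) (hm : 0 < m) (x x₀ : ℝ) :
    exp (β * x₀ * m) / (β * m) + exp (β * x₀ * m) * (x - x₀) ≤ exp (β * x * m) / (β * m) := by
  have hk : 0 < β * m := mul_pos hβ hm
  have key : exp (β * x₀ * m) * (β * x * m - β * x₀ * m + 1) ≤ exp (β * x * m) :=
    calc _ ≤ exp (β * x₀ * m) * exp (β * x * m - β * x₀ * m) := by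
          gcongr; exact add_one_le_exp _
      _ = exp (β * x * m) := by rw [← exp_add]; ring_nf
  rw [div_add' _ _ _ hk.ne', div_le_div_iff_of_pos_right hk]
  linear_combination key

theorem div_mem_uIcc_div {a b x d : ℝ} (hd : d ≠ 0) (ha : a ≤ x) (hb : x ≤ b) :
    x / d ∈ uIcc (a / d) (b / d) := by
  rcases hd.lt_or_gt with hd | hd
  · exact mem_uIcc.2 (Or.inr ⟨div_le_div_of_nonpos_of_le hd.le hb,
      div_le_div_of_nonpos_of_le hd.le ha⟩)
  · exact mem_uIcc.2 (Or.inl ⟨div_le_div_of_nonneg_right ha hd.le,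
      div_le_div_of_nonneg_right hb hd.le⟩)

theorem hasDerivWithinAt_envelope {f : ℝ → ℝ} {c : ℝ → ℝ → ℝ} {y : ℝ → ℝ} {s : Set ℝ} {a D : ℝ}
    (ha : a ∈ s) (hf : ∀ μ ∈ s, f μ = c μ (y μ)) (hle : ∀ μ ∈ s, ∀ ν ∈ s, c μ (y ν) ≤ f μ)
    (h₁ : Tendsto (fun μ => (c μ (y a) - c a (y a)) / (μ - a)) (𝓝[s \ {a}] a) (𝓝 D))
    (h₂ : Tendsto (fun μ => (c μ (y μ) - c a (y μ)) / (μ - a)) (𝓝[s \ {a}] a) (𝓝 D)) :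
    HasDerivWithinAt f D s a := by
  rw [hasDerivWithinAt_iff_tendsto_slope]
  have hslope : ∀ μ ∈ s \ {a}, slope f a μ ∈
      uIcc ((c μ (y a) - c a (y a)) / (μ - a)) ((c μ (y μ) - c a (y μ)) / (μ - a)) := by
    rintro μ ⟨hμ, hμa⟩
    rw [slope_def_field]
    refine div_mem_uIcc_div (sub_ne_zero.2 hμa) ?_ ?_
    · linarith [hf a ha, hle μ hμ a ha]
    · linarith [hf μ hμ, hle a ha μ hμ]
  refine tendsto_of_tendsto_of_tendsto_of_le_of_le' (by simpa using h₁.min h₂)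
    (by simpa using h₁.max h₂) ?_ ?_ <;>
  filter_upwards [self_mem_nhdsWithin] with μ hμ
  exacts [(hslope μ hμ).1, (hslope μ hμ).2]

theorem continuousWithinAt_of_strictMonoOn_of_apply_eq {g : ℝ → ℝ → ℝ} {y : ℝ → ℝ}
    {U s : Set ℝ} {a t : ℝ} (hU : IsOpen U) (ha : a ∈ s)
    (hg : ∀ z, ContinuousAt (fun μ => g μ z) a) (hmono : ∀ μ ∈ s, StrictMonoOn (g μ) U)
    (hyU : ∀ μ ∈ s, y μ ∈ U) (hyt : ∀ μ ∈ s, g μ (y μ) = t) :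
    ContinuousWithinAt y s a := by
  have hUa : U ∈ 𝓝 (y a) := hU.mem_nhds (hyU a ha)
  refine tendsto_order.2 ⟨fun l hl => ?_, fun u hu => ?_⟩
  · obtain ⟨l', hl'U, hll', hl'a⟩ : (U ∩ Ioo l (y a)).Nonempty :=
      nonempty_of_mem (inter_mem (mem_nhdsWithin_of_mem_nhds hUa) (Ioo_mem_nhdsLT hl))
    have hlt : g a l' < t := hyt a ha ▸ hmono a ha hl'U (hyU a ha) hl'a
    filter_upwards [nhdsWithin_le_nhds ((hg l').eventually_lt_const hlt), self_mem_nhdsWithin]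
      with μ hμ hμs
    exact hll'.trans
      (((hmono μ hμs).lt_iff_lt hl'U (hyU μ hμs)).1 (hμ.trans_eq (hyt μ hμs).symm))
  · obtain ⟨u', hu'U, hau', hu'u⟩ : (U ∩ Ioo (y a) u).Nonempty :=
      nonempty_of_mem (inter_mem (mem_nhdsWithin_of_mem_nhds hUa) (Ioo_mem_nhdsGT hu))
    have hlt : t < g a u' := hyt a ha ▸ hmono a ha (hyU a ha) hu'U hau'
    filter_upwards [nhdsWithin_le_nhds ((hg u').eventually_const_lt hlt), self_mem_nhdsWithin]
      with μ hμ hμs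
    exact (((hmono μ hμs).lt_iff_lt (hyU μ hμs) hu'U).1 ((hyt μ hμs).trans_lt hμ)).trans hu'u

section piQ

variable {β : ℝ} {Q : ℕ}

theorem summable_exp_tail {y : ℝ} (h : β * y < 0) :
    Summable fun n : ℕ => exp (β * y * ((n + Q + 1 : ℕ) : ℝ)) :=
  summable_exp_nat_mul_of_ge h fun n => by push_cast; linarith

theorem summable_exp_div_tail (hβ : 0 < β) {y : ℝ} (hy : y < 0) :
    Summable fun n : ℕ => exp (β * y * ((n + Q + 1 : ℕ) : ℝ)) / (β * ((n + Q + 1 : ℕ) : ℝ)) := by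
  refine ((summable_exp_tail (Q := Q) (mul_neg_of_pos_of_neg hβ hy)).div_const β).of_nonneg_of_le
    (fun n => by positivity) fun n => ?_
  refine div_le_div_of_nonneg_left (exp_pos _).le hβ (le_mul_of_one_le_right hβ.le ?_)
  exact_mod_cast Nat.le_add_left 1 _

theorem piQ_add_piQ'_mul_sub_le (hβ : 0 < β) (lam : ℝ) {y₀ y : ℝ} (hy₀ : y₀ < 0) (hy : y < 0) :
    piQ β lam Q y₀ + piQ' β lam Q y₀ * (y - y₀) ≤ piQ β lam Q y := by
  have hfin : ∑ q ∈ Finset.Icc 1 Q, exp (β * (y₀ + lam) * q) / (β * q) +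
      (∑ q ∈ Finset.Icc 1 Q, exp (β * (y₀ + lam) * q)) * (y - y₀) ≤
      ∑ q ∈ Finset.Icc 1 Q, exp (β * (y + lam) * q) / (β * q) := by
    rw [Finset.sum_mul, ← Finset.sum_add_distrib]
    refine Finset.sum_le_sum fun q hq => ?_
    have hq₀ : (0 : ℝ) < q := by exact_mod_cast (Finset.mem_Icc.1 hq).1
    simpa only [add_sub_add_right_eq_sub] using exp_div_tangent_le hβ hq₀ (y + lam) (y₀ + lam)
  have htail := hasSum_le (fun n => exp_div_tangent_le hβ (by positivity) y y₀)
    ((summable_exp_div_tail hβ hy₀).hasSum.add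
      ((summable_exp_tail (Q := Q) (mul_neg_of_pos_of_neg hβ hy₀)).hasSum.mul_right (y - y₀)))
    (summable_exp_div_tail hβ hy).hasSum
  simp only [piQ, piQ']
  linear_combination hfin + htail

theorem isGreatest_image_of_piQ'_eq (hβ : 0 < β) {lam t y₀ : ℝ} (hy₀ : y₀ < 0)
    (ht : piQ' β lam Q y₀ = t) :
    IsGreatest ((fun y => t * y - piQ β lam Q y) '' Iio 0) (t * y₀ - piQ β lam Q y₀) := by
  refine ⟨mem_image_of_mem _ hy₀, ?_⟩
  rintro _ ⟨y, hy, rfl⟩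
  linarith [ht ▸ piQ_add_piQ'_mul_sub_le hβ lam hy₀ hy]

theorem piQ'_strictMonoOn (hβ : 0 < β) (lam : ℝ) : StrictMonoOn (piQ' β lam Q) (Iio 0) := by
  intro y₁ hy₁ y₂ hy₂ h
  refine add_lt_add_of_le_of_lt (Finset.sum_le_sum fun q _ => ?_) ?_
  · gcongr
  · refine (summable_exp_tail (mul_neg_of_pos_of_neg hβ hy₁)).tsum_lt_tsum (i := 0)
      (fun n => ?_) ?_ (summable_exp_tail (mul_neg_of_pos_of_neg hβ hy₂)) <;> gcongr

theorem piQ_strictMono_lam (hβ : 0 < β) (hQ : 1 ≤ Q) (y : ℝ) :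
    StrictMono fun lam => piQ β lam Q y := by
  intro l₁ l₂ h
  refine add_lt_add_left (Finset.sum_lt_sum_of_nonempty (Finset.nonempty_Icc.2 hQ)
    fun q hq => ?_) _
  have hq₀ : (0 : ℝ) < q := by exact_mod_cast (Finset.mem_Icc.1 hq).1
  gcongr

theorem piQ_sub_div_eq_sum_mul_slope (lam μ y : ℝ) :
    (piQ β μ Q y - piQ β lam Q y) / (μ - lam) = ∑ q ∈ Finset.Icc 1 Q,
      exp (β * y * q) * slope (fun s => exp (β * s * q) / (β * q)) lam μ := by
  simp only [piQ, add_sub_add_right_eq_sub, ← Finset.sum_sub_distrib, Finset.sum_div,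
    slope_def_field]
  refine Finset.sum_congr rfl fun q _ => ?_
  rw [show β * (y + μ) * q = β * y * q + β * μ * q by ring,
    show β * (y + lam) * q = β * y * q + β * lam * q by ring, exp_add, exp_add]
  ring

theorem tendsto_piQ_sub_div (hβ : β ≠ 0) {lam y₀ : ℝ} {y : ℝ → ℝ} {L : Filter ℝ}
    (hL : L ≤ 𝓝[≠] lam) (hy : Tendsto y L (𝓝 y₀)) :
    Tendsto (fun μ => (piQ β μ Q (y μ) - piQ β lam Q (y μ)) / (μ - lam)) L
      (𝓝 (∑ q ∈ Finset.Icc 1 Q, exp (β * (y₀ + lam) * q))) := by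
  simp only [piQ_sub_div_eq_sum_mul_slope]
  refine tendsto_finsetSum _ fun q hq => ?_
  have hβq : β * q ≠ 0 :=
    mul_ne_zero hβ (Nat.cast_ne_zero.2 (Nat.one_le_iff_ne_zero.1 (Finset.mem_Icc.1 hq).1))
  have hderiv : HasDerivAt (fun s => exp (β * s * q) / (β * q)) (exp (β * lam * q)) lam := by
    refine ((((hasDerivAt_id' lam).const_mul β).mul_const (q : ℝ)).exp.div_const _).congr_deriv ?_
    rw [mul_one, mul_div_assoc, div_self hβq, mul_one]
  have hexp : Tendsto (fun μ => exp (β * y μ * q)) L (𝓝 (exp (β * y₀ * q))) :=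
    ((by fun_prop : Continuous fun z => exp (β * z * q)).tendsto y₀).comp hy
  convert hexp.mul ((hasDerivAt_iff_tendsto_slope.1 hderiv).mono_left hL) using 2
  rw [← exp_add]
  ring_nf

end piQ

theorem piQstar_decreasing_in_lambda_general (β t : ℝ) (Q : ℕ) (hβ : 0 < β)
    (hQ : 1 ≤ Q)
    (yfun : ℝ → ℝ)
    (hy : ∀ lam ≥ (0 : ℝ), yfun lam < 0 ∧ piQ' β lam Q (yfun lam) = t) :
    StrictAntiOn (fun lam => sSup ((fun y => t * y - piQ β lam Q y) '' Iio (0 : ℝ)))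
      (Ici (0 : ℝ)) ∧
    (∀ lam ≥ (0 : ℝ),
      HasDerivWithinAt (fun l => sSup ((fun y => t * y - piQ β l Q y) '' Iio (0 : ℝ)))
        (-(∑ q ∈ Finset.Icc 1 Q, Real.exp (β * (yfun lam + lam) * q))) (Ici 0) lam ∧
      -(∑ q ∈ Finset.Icc 1 Q, Real.exp (β * (yfun lam + lam) * q)) < 0) := by
  have hmax : ∀ lam ≥ (0 : ℝ), IsGreatest ((fun y => t * y - piQ β lam Q y) '' Iio 0)
      (t * yfun lam - piQ β lam Q (yfun lam)) := fun lam hlam =>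
    isGreatest_image_of_piQ'_eq hβ (hy lam hlam).1 (hy lam hlam).2
  have hle : ∀ μ ≥ (0 : ℝ), ∀ ν ≥ (0 : ℝ), t * yfun ν - piQ β μ Q (yfun ν) ≤
      sSup ((fun y => t * y - piQ β μ Q y) '' Iio 0) := fun μ hμ ν hν =>
    (hmax μ hμ).csSup_eq ▸ (hmax μ hμ).2 (mem_image_of_mem _ (hy ν hν).1)
  refine ⟨fun l₁ h₁ l₂ h₂ hl => ?_, fun lam hlam => ⟨?_, ?_⟩⟩
  · calc _ = t * yfun l₂ - piQ β l₂ Q (yfun l₂) := (hmax l₂ h₂).csSup_eq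
      _ < t * yfun l₂ - piQ β l₁ Q (yfun l₂) := by
        linarith [piQ_strictMono_lam hβ hQ (yfun l₂) hl]
      _ ≤ _ := hle l₁ h₁ l₂ h₂
  · have hL : 𝓝[Ici 0 \ {lam}] lam ≤ 𝓝[≠] lam := nhdsWithin_mono _ fun μ hμ => hμ.2
    have hcont : ContinuousWithinAt yfun (Ici 0) lam :=
      continuousWithinAt_of_strictMonoOn_of_apply_eq isOpen_Iio hlam
        (fun z => by unfold piQ'; fun_prop) (fun μ _ => piQ'_strictMonoOn hβ μ)
        (fun μ hμ => (hy μ hμ).1) (fun μ hμ => (hy μ hμ).2)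
    refine hasDerivWithinAt_envelope (c := fun μ y => t * y - piQ β μ Q y) hlam
      (fun μ hμ => (hmax μ hμ).csSup_eq) hle ?_ ?_ <;>
    refine ((tendsto_piQ_sub_div hβ.ne' hL ?_).neg).congr fun μ => by ring
    exacts [tendsto_const_nhds, hcont.tendsto.mono_left (nhdsWithin_mono _ sdiff_subset)]
  · exact neg_lt_zero.2 (Finset.sum_pos (fun q _ => exp_pos _) (Finset.nonempty_Icc.2 hQ))

/-- The Legendre transform `π*_{Q,λ}(t) = sup_{y<0}(t·y - π_{Q,λ}(y))` is a
decreasing function of `λ ≥ 0`, with λ-derivative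
`-Σ_{q=1}^{Q} e^{β(y_{Q,λ}(t)+λ)q} < 0`, where `y_{Q,λ}(t)` is the unique
solution of `t = π'_{Q,λ}(y)`. -/
theorem piQstar_decreasing_in_lambda (β t : ℝ) (Q : ℕ) (hβ : 0 < β) (ht : 0 < t)
    (hQ : 1 ≤ Q)
    (yfun : ℝ → ℝ)
    (hy : ∀ lam ≥ (0 : ℝ), yfun lam < 0 ∧ piQ' β lam Q (yfun lam) = t) :
    StrictAntiOn (fun lam => sSup ((fun y => t * y - piQ β lam Q y) '' Iio (0 : ℝ)))
      (Ici (0 : ℝ)) ∧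
    (∀ lam ≥ (0 : ℝ),
      HasDerivWithinAt (fun l => sSup ((fun y => t * y - piQ β l Q y) '' Iio (0 : ℝ)))
        (-(∑ q ∈ Finset.Icc 1 Q, Real.exp (β * (yfun lam + lam) * q))) (Ici 0) lam ∧
      -(∑ q ∈ Finset.Icc 1 Q, Real.exp (β * (yfun lam + lam) * q)) < 0) :=
  piQstar_decreasing_in_lambda_general β t Q hβ hQ yfun hy
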